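/- arXiv:2502.02360 — 2 statements merged into one kernel-verified Lean document; each statement's English description precedes it below -/
import Mathlib

section
/- Let A be an FDDS whose transition function has no fixed point, and let k ≥ 1 be an integer. Then the monomial A X^k is not injective up to isomorphism: there exist FDDS X and Y with X not isomorphic to Y but A × X^k ≅ A × Y^k. -/
/-- Isomorphism of finite dynamical systems: a bijection commuting with the maps. -/
def FddsIso {α β : Type} (f : α → α) (g : β → β) : Prop :=
  ∃ e : α ≃ β, ⇑e ∘ f = g ∘ ⇑e

/-- A state is periodic if some positive iterate fixes it. -/
def IsPeriodicState {α : Type} (f : α → α) (x : α) : Prop :=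
  ∃ n > 0, f^[n] x = x

/-- The vertex set of the unroll of `(α, f)`. -/
def UnrollSet {α : Type} (f : α → α) : Set (α × ℕ) :=
  {p | IsPeriodicState f (f^[p.2] p.1)}

/-- The parent map of the unroll. -/
def unrollMap {α : Type} (f : α → α) (q : UnrollSet f) : UnrollSet f :=
  if h : q.1.2 = 0 then q
  else ⟨(f q.1.1, q.1.2 - 1), by
    obtain ⟨⟨x, k⟩, hq⟩ := q
    simp only at h
    obtain ⟨k', rfl⟩ := Nat.exists_eq_succ_of_ne_zero h
    simpa [UnrollSet, Function.iterate_succ_apply] using hq⟩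

/-- Isomorphism of unrolls. -/
def UnrollIso {α β : Type} (f : α → α) (g : β → β) : Prop :=
  ∃ φ : UnrollSet f ≃ UnrollSet g, ⇑φ ∘ unrollMap f = unrollMap g ∘ ⇑φ

/-- Vertices of the cut at depth `n` of the unroll. -/
def CutSet {α : Type} (f : α → α) (n : ℕ) : Set (α × ℕ) :=
  {p | p ∈ UnrollSet f ∧ p.2 ≤ n}

/-- The parent map of the cut at depth `n`. -/
def cutMap {α : Type} (f : α → α) (n : ℕ) (q : CutSet f n) : CutSet f n :=
  if h : q.1.2 = 0 then q
  else ⟨(f q.1.1, q.1.2 - 1), by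
    obtain ⟨⟨x, k⟩, hq⟩ := q
    obtain ⟨hq1, hq2⟩ := hq
    simp only at h hq2 ⊢
    obtain ⟨k', rfl⟩ := Nat.exists_eq_succ_of_ne_zero h
    refine ⟨by simpa [UnrollSet, Function.iterate_succ_apply] using hq1, by omega⟩⟩

/-- Isomorphism of cuts at depth `n`. -/
def CutIso {α β : Type} (f : α → α) (g : β → β) (n : ℕ) : Prop :=
  ∃ φ : CutSet f n ≃ CutSet g n, ⇑φ ∘ cutMap f n = cutMap g n ∘ ⇑φ

/-- The states of the components whose cycle length divides `p`. -/
def DivSet {α : Type} (f : α → α) (p : ℕ) : Set α :=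
  {x | ∃ N, f^[N + p] x = f^[N] x}

/-- The restriction of `f` to `DivSet f p`. -/
def divMap {α : Type} (f : α → α) (p : ℕ) (q : DivSet f p) : DivSet f p :=
  ⟨f q.1, by
    obtain ⟨x, N, hN⟩ := q
    exact ⟨N, by
      rw [← Function.iterate_succ_apply, ← Function.iterate_succ_apply,
        Function.iterate_succ_apply', Function.iterate_succ_apply', hN]⟩⟩

/-- `k`-th power of an FDDS: map on `Fin k → α`. -/
def powMap {α : Type} (f : α → α) (k : ℕ) (v : Fin k → α) : Fin k → α := f ∘ v

/-- Evaluation of the polynomial `Σ_{i=0}^m A_i X^i` at `(α, f)`. -/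
def polyEval {m : ℕ} {γ : Fin (m + 1) → Type} (g : ∀ i, γ i → γ i)
    {α : Type} (f : α → α)
    (x : Σ i : Fin (m + 1), γ i × (Fin i.val → α)) :
    Σ i : Fin (m + 1), γ i × (Fin i.val → α) :=
  ⟨x.1, g x.1 x.2.1, f ∘ x.2.2⟩

/-- Evaluation of the constant-free polynomial `Σ_{i=1}^m A_i X^i` at `(α, f)`. -/
def polyEvalNC {m : ℕ} {γ : Fin m → Type} (g : ∀ i, γ i → γ i)
    {α : Type} (f : α → α)
    (x : Σ i : Fin m, γ i × (Fin (i.val + 1) → α)) :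
    Σ i : Fin m, γ i × (Fin (i.val + 1) → α) :=
  ⟨x.1, g x.1 x.2.1, f ∘ x.2.2⟩

/-- An FDDS is cancelable if it can be canceled from products. -/
def Cancelable {α : Type} (f : α → α) : Prop :=
  ∀ (β γ : Type) [Fintype β] [Fintype γ] (g : β → β) (h : γ → γ),
    FddsIso (Prod.map f g) (Prod.map f h) → FddsIso g h

/-!
Write `C_p` for the cycle of length `p` and `p X` for `p` disjoint copies of `X`. Every
component of `A` has a cycle of some length `p` with `2 ≤ p ≤ |A|`. On the components whose
cycle length is divisible by `p` there is a phase `φ : A → ℤ/p` with `φ (a x) = φ x + 1`, and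
`(x, z, w) ↦ (x, z - φ x, w)` is an isomorphism `A × C_p × X ≅ A × p X`. Hence `A` annihilates
`∏_{p=2}^{|A|} (C_p - p)`: writing this product as `B - C` with `B`, `C` honest systems gives
`A × B ≅ A × C`, and then `A × B^k ≅ A × C^k` by induction on `k`. Exactly one of `B` and `C`
has a fixed point, so they are not isomorphic.
-/

namespace FddsIso

variable {α β γ δ : Type} {a : α → α} {f : α → α} {g : β → β} {h : γ → γ} {d : δ → δ}

theorem of_equiv (e : α ≃ β) (he : Function.Semiconj e f g) : FddsIso f g := ⟨e, funext he⟩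

theorem refl (f : α → α) : FddsIso f f := of_equiv (Equiv.refl α) fun _ => rfl

theorem symm : FddsIso f g → FddsIso g f
  | ⟨e, he⟩ =>
    of_equiv e.symm (Function.Semiconj.inverse_left (congrFun he) e.left_inv e.right_inv)

theorem trans : FddsIso f g → FddsIso g h → FddsIso f h
  | ⟨e₁, h₁⟩, ⟨e₂, h₂⟩ => of_equiv (e₁.trans e₂)
      ((Function.semiconj_iff_comp_eq.2 h₁).trans (Function.semiconj_iff_comp_eq.2 h₂))

theorem prodMap {f' : γ → γ} {g' : δ → δ} :
    FddsIso f f' → FddsIso g g' → FddsIso (Prod.map f g) (Prod.map f' g')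
  | ⟨e₁, h₁⟩, ⟨e₂, h₂⟩ => of_equiv (e₁.prodCongr e₂) fun p =>
      Prod.ext (congrFun h₁ p.1) (congrFun h₂ p.2)

theorem sumMap {f' : γ → γ} {g' : δ → δ} :
    FddsIso f f' → FddsIso g g' → FddsIso (Sum.map f g) (Sum.map f' g')
  | ⟨e₁, h₁⟩, ⟨e₂, h₂⟩ => of_equiv (e₁.sumCongr e₂) fun
      | .inl x => congrArg Sum.inl (congrFun h₁ x)
      | .inr y => congrArg Sum.inr (congrFun h₂ y)

theorem prodMap_right (a : α → α) (H : FddsIso g h) : FddsIso (Prod.map a g) (Prod.map a h) :=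
  (refl a).prodMap H

theorem prodMap_assoc (f : α → α) (g : β → β) (h : γ → γ) :
    FddsIso (Prod.map (Prod.map f g) h) (Prod.map f (Prod.map g h)) :=
  of_equiv (Equiv.prodAssoc α β γ) fun _ => rfl

theorem prodMap_comm (f : α → α) (g : β → β) : FddsIso (Prod.map f g) (Prod.map g f) :=
  of_equiv (Equiv.prodComm α β) fun _ => rfl

theorem sumMap_comm (f : α → α) (g : β → β) : FddsIso (Sum.map f g) (Sum.map g f) :=
  of_equiv (Equiv.sumComm α β) fun p => by cases p <;> rfl

theorem prodMap_sumMap (f : α → α) (g : β → β) (h : γ → γ) :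
    FddsIso (Prod.map f (Sum.map g h)) (Sum.map (Prod.map f g) (Prod.map f h)) :=
  of_equiv (Equiv.prodSumDistrib α β γ) fun ⟨_, p⟩ => by cases p <;> rfl

theorem sigmaMap {I : Type} {X Y : I → Type} {F : ∀ i, X i → X i} {G : ∀ i, Y i → Y i}
    (H : ∀ i, FddsIso (F i) (G i)) : FddsIso (Sigma.map id F) (Sigma.map id G) := by
  choose e he using H
  exact of_equiv (Equiv.sigmaCongrRight e) fun ⟨i, x⟩ =>
    Sigma.ext rfl (heq_of_eq (congrFun (he i) x))

theorem prodMap_sigmaMap {I : Type} {X : I → Type} (F : ∀ i, X i → X i) (g : γ → γ) :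
    FddsIso (Prod.map (Sigma.map id F) g) (Sigma.map id fun i => Prod.map (F i) g) :=
  of_equiv (Equiv.sigmaProdDistrib X γ) fun _ => rfl

theorem prodMap_prodMap_of_assoc
    (H : FddsIso (Prod.map (Prod.map a d) g) (Prod.map (Prod.map a d) h)) :
    FddsIso (Prod.map a (Prod.map d g)) (Prod.map a (Prod.map d h)) :=
  (prodMap_assoc a d g).symm.trans (H.trans (prodMap_assoc a d h))

theorem prodMap_left_comm (f : α → α) (g : β → β) (h : γ → γ) :
    FddsIso (Prod.map (Prod.map f g) h) (Prod.map g (Prod.map f h)) :=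
  ((prodMap_comm f g).prodMap (refl h)).trans (prodMap_assoc g f h)

theorem prodMap_prodMap_of_prodMap {β' γ' : Type} {g' : β' → β'} {h' : γ' → γ'}
    (Hg : FddsIso (Prod.map a g) (Prod.map a g')) (Hh : FddsIso (Prod.map a h) (Prod.map a h')) :
    FddsIso (Prod.map a (Prod.map g h)) (Prod.map a (Prod.map g' h')) :=
  (prodMap_assoc a g h).symm.trans <| (Hg.prodMap (refl h)).trans <|
    (prodMap_left_comm a g' h).trans <| (prodMap_right g' Hh).trans <|
    (prodMap_left_comm a g' h').symm.trans (prodMap_assoc a g' h')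

theorem exists_isFixedPt (H : FddsIso f g) (hf : ∃ x, Function.IsFixedPt f x) :
    ∃ y, Function.IsFixedPt g y := by
  obtain ⟨e, he⟩ := H
  obtain ⟨x, hx⟩ := hf
  exact ⟨e x, (congrFun he x).symm.trans (congrArg e hx)⟩

theorem powMap_zero (g : β → β) (h : γ → γ) : FddsIso (powMap g 0) (powMap h 0) :=
  of_equiv (Equiv.ofUnique _ _) fun _ => Subsingleton.elim _ _

theorem powMap_succ (g : β → β) (k : ℕ) : FddsIso (powMap g (k + 1)) (Prod.map g (powMap g k)) :=
  of_equiv (Fin.consEquiv fun _ => β).symm fun _ => rfl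

theorem prodMap_powMap (H : FddsIso (Prod.map a g) (Prod.map a h)) (k : ℕ) :
    FddsIso (Prod.map a (powMap g k)) (Prod.map a (powMap h k)) := by
  induction k with
  | zero => exact prodMap_right a (powMap_zero g h)
  | succ k ih =>
    exact (prodMap_right a (powMap_succ g k)).trans <|
      (prodMap_prodMap_of_prodMap H ih).trans (prodMap_right a (powMap_succ h k)).symm

end FddsIso

namespace Function

variable {α : Type} {f : α → α}

theorem natCast_eq_natCast_of_iterate_eq {x : α} {m n p : ℕ} (h : f^[m] x = f^[n] x)
    (hp : p ∣ minimalPeriod f (f^[m] x)) : (m : ZMod p) = n := by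
  wlog hmn : m ≤ n generalizing m n
  · exact (this h.symm (by rwa [← h]) (le_of_not_ge hmn)).symm
  rw [ZMod.natCast_eq_natCast_iff, Nat.modEq_iff_dvd' hmn]
  refine hp.trans (IsPeriodicPt.minimalPeriod_dvd ?_)
  rw [IsPeriodicPt, IsFixedPt, ← iterate_add_apply, Nat.sub_add_cancel hmn, h]

variable [Fintype α]

variable (f) in
theorem iterate_card_mem_periodicPts (x : α) : f^[Fintype.card α] x ∈ periodicPts f := by
  obtain ⟨i, j, hij, hfij⟩ := Fintype.exists_ne_map_eq_of_card_lt
    (fun t : Fin (Fintype.card α + 1) => f^[t] x) (by simp)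
  wlog hlt : i < j generalizing i j
  · exact this j i hij.symm hfij.symm (lt_of_le_of_ne (not_lt.1 hlt) hij.symm)
  have hi : f^[i] x ∈ periodicPts f := by
    refine mk_mem_periodicPts (n := j - i) (by omega) ?_
    rw [IsPeriodicPt, IsFixedPt, ← iterate_add_apply, Nat.sub_add_cancel hlt.le]
    exact hfij.symm
  obtain ⟨n, hn⟩ := hi
  refine ⟨n, hn.1, ?_⟩
  have := hn.2.apply_iterate (Fintype.card α - i)
  rwa [← iterate_add_apply, Nat.sub_add_cancel (by omega)] at this

variable (f) in
noncomputable def eventualPeriod (x : α) : ℕ := minimalPeriod f (f^[Fintype.card α] x)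

theorem eventualPeriod_apply (x : α) : eventualPeriod f (f x) = eventualPeriod f x := by
  rw [eventualPeriod, ← iterate_succ_apply, iterate_succ_apply',
    minimalPeriod_apply (iterate_card_mem_periodicPts f x), eventualPeriod]

theorem eventualPeriod_le_card (x : α) : eventualPeriod f x ≤ Fintype.card α :=
  minimalPeriod_le_card

theorem two_le_eventualPeriod (hf : ∀ x, f x ≠ x) (x : α) : 2 ≤ eventualPeriod f x := by
  have hpos := minimalPeriod_pos_of_mem_periodicPts (iterate_card_mem_periodicPts f x)
  have hne : eventualPeriod f x ≠ 1 := fun h => hf _ (minimalPeriod_eq_one_iff_isFixedPt.1 h)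
  rw [eventualPeriod] at hne ⊢
  omega

variable (f) in
noncomputable def cycleBase (x : α) : α :=
  @Classical.epsilon α ⟨x⟩ (· ∈ periodicOrbit f (f^[Fintype.card α] x))

theorem cycleBase_apply (x : α) : cycleBase f (f x) = cycleBase f x := by
  rw [cycleBase, ← iterate_succ_apply, iterate_succ_apply',
    periodicOrbit_apply_eq (iterate_card_mem_periodicPts f x), cycleBase]

theorem exists_iterate_eq_cycleBase (x : α) :
    ∃ n, f^[n] (f^[Fintype.card α] x) = cycleBase f x := by
  have hx := iterate_card_mem_periodicPts f x
  exact (mem_periodicOrbit_iff hx).1 <|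
    Classical.epsilon_spec ⟨_, iterate_mem_periodicOrbit hx 0⟩

variable (f) in
noncomputable def phase (p : ℕ) (x : α) : ZMod p :=
  -(Classical.epsilon fun n => f^[n] x = cycleBase f x : ℕ)

theorem phase_apply {p : ℕ} {x : α} (hp : p ∣ eventualPeriod f x) :
    phase f p (f x) = phase f p x + 1 := by
  have hreach (y : α) : ∃ n, f^[n] y = cycleBase f y := by
    obtain ⟨n, hn⟩ := exists_iterate_eq_cycleBase (f := f) y
    exact ⟨n + Fintype.card α, by rwa [iterate_add_apply]⟩
  set m := Classical.epsilon fun n => f^[n] x = cycleBase f x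
  set m' := Classical.epsilon fun n => f^[n] (f x) = cycleBase f (f x)
  have hm : f^[m] x = cycleBase f x := Classical.epsilon_spec (hreach x)
  have hm' : f^[m' + 1] x = f^[m] x := by
    rw [iterate_succ_apply, hm, Classical.epsilon_spec (hreach (f x)), cycleBase_apply]
  have hper : minimalPeriod f (f^[m' + 1] x) = eventualPeriod f x := by
    obtain ⟨n, hn⟩ := exists_iterate_eq_cycleBase (f := f) x
    rw [hm', hm, ← hn, minimalPeriod_apply_iterate (iterate_card_mem_periodicPts f x),
      eventualPeriod]
  have := natCast_eq_natCast_of_iterate_eq hm' (hper ▸ hp)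
  change -(m' : ZMod p) = -(m : ZMod p) + 1
  rw [← this]
  push_cast
  ring

end Function


section Fibers

variable {α I : Type} (a : α → α) (ι : α → I) (hι : ∀ x, ι (a x) = ι x)

def restrictFiber (i : I) : {x // ι x = i} → {x // ι x = i} :=
  Subtype.map a fun x hx => (hι x).trans hx

theorem FddsIso.sigmaMap_restrictFiber : FddsIso (Sigma.map id (restrictFiber a ι hι)) a :=
  FddsIso.of_equiv (Equiv.sigmaFiberEquiv ι) fun _ => rfl

variable {a ι hι} in
theorem FddsIso.prodMap_of_restrictFiber {β γ : Type} {g : β → β} {h : γ → γ}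
    (H : ∀ i, FddsIso (Prod.map (restrictFiber a ι hι i) g)
      (Prod.map (restrictFiber a ι hι i) h)) :
    FddsIso (Prod.map a g) (Prod.map a h) :=
  have e := sigmaMap_restrictFiber a ι hι
  ((e.symm.prodMap (refl g)).trans <| (prodMap_sigmaMap _ g).trans (sigmaMap H)).trans <|
    (prodMap_sigmaMap _ h).symm.trans (e.prodMap (refl h))

end Fibers

structure Fdds where
  carrier : Type
  [fintype : Fintype carrier]
  map : carrier → carrier

attribute [instance] Fdds.fintype

namespace Fdds

def HasFixedPt (X : Fdds) : Prop := ∃ x, Function.IsFixedPt X.map x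

theorem hasFixedPt_iff_of_fddsIso {X Y : Fdds} (H : FddsIso X.map Y.map) :
    X.HasFixedPt ↔ Y.HasFixedPt :=
  ⟨H.exists_isFixedPt, H.symm.exists_isFixedPt⟩

/-- `C_p × X + p · Y`, where `C_p` is the cycle of length `p`. -/
def gadgetStep (p : ℕ) [NeZero p] (X Y : Fdds) : Fdds where
  carrier := (ZMod p × X.carrier) ⊕ (ZMod p × Y.carrier)
  map := Sum.map (Prod.map (· + 1) X.map) (Prod.map id Y.map)

theorem hasFixedPt_gadgetStep {p : ℕ} [NeZero p] (hp : p ≠ 1) (X Y : Fdds) :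
    (gadgetStep p X Y).HasFixedPt ↔ Y.HasFixedPt := by
  have h1 : (1 : ZMod p) ≠ 0 := by rwa [Ne, ZMod.one_eq_zero_iff]
  constructor
  · rintro ⟨⟨z, x⟩ | ⟨z, y⟩, hfix⟩
    · simp [gadgetStep, Function.IsFixedPt, h1] at hfix
    · exact ⟨y, by simpa [gadgetStep, Function.IsFixedPt] using hfix⟩
  · rintro ⟨y, hy⟩
    exact ⟨.inr (0, y), by simpa [gadgetStep, Function.IsFixedPt] using hy⟩

/-- In the semiring of FDDS, `(gadget r).1 - (gadget r).2 = ∏_{j < r} (C_{j+2} - (j + 2))`. -/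
def gadget : ℕ → Fdds × Fdds
  | 0 => ({ carrier := PUnit, map := id }, { carrier := PEmpty, map := id })
  | r + 1 => (gadgetStep (r + 2) (gadget r).1 (gadget r).2,
      gadgetStep (r + 2) (gadget r).2 (gadget r).1)

theorem hasFixedPt_gadget_snd_iff (r : ℕ) :
    (gadget r).2.HasFixedPt ↔ ¬ (gadget r).1.HasFixedPt := by
  induction r with
  | zero => simp [gadget, HasFixedPt, Function.IsFixedPt]
  | succ r ih =>
    simp only [gadget, hasFixedPt_gadgetStep (by omega : r + 2 ≠ 1), ih, not_not]

theorem not_fddsIso_gadget (r : ℕ) : ¬ FddsIso (gadget r).1.map (gadget r).2.map := fun H =>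
  iff_not_self ((hasFixedPt_iff_of_fddsIso H).trans (hasFixedPt_gadget_snd_iff r))

theorem fddsIso_prodMap_cycle_of_phase {δ β : Type} {d : δ → δ} {p : ℕ} (φ : δ → ZMod p)
    (hφ : ∀ x, φ (d x) = φ x + 1) (g : β → β) :
    FddsIso (Prod.map d (Prod.map (· + 1 : ZMod p → ZMod p) g))
      (Prod.map d (Prod.map (id : ZMod p → ZMod p) g)) :=
  FddsIso.of_equiv
    (Equiv.prodShear (Equiv.refl δ) fun x => (Equiv.subRight (φ x)).prodCongr (Equiv.refl β))
    fun ⟨x, z, w⟩ => by simp [hφ]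

theorem fddsIso_prodMap_gadget {r j : ℕ} (hj : j < r) {δ : Type} {d : δ → δ}
    (φ : δ → ZMod (j + 2)) (hφ : ∀ x, φ (d x) = φ x + 1) :
    FddsIso (Prod.map d (gadget r).1.map) (Prod.map d (gadget r).2.map) := by
  induction r generalizing δ with
  | zero => omega
  | succ r ih =>
    refine (FddsIso.prodMap_sumMap _ _ _).trans
      (FddsIso.trans ?_ (FddsIso.prodMap_sumMap _ _ _).symm)
    rcases Nat.lt_succ_iff_lt_or_eq.1 hj with hjr | rfl
    · exact FddsIso.sumMap
        (FddsIso.prodMap_prodMap_of_assoc (ih hjr (fun x => φ x.1) fun x => hφ x.1))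
        (FddsIso.prodMap_prodMap_of_assoc (ih hjr (fun x => φ x.1) fun x => hφ x.1)).symm
    · exact ((fddsIso_prodMap_cycle_of_phase φ hφ _).sumMap
        (fddsIso_prodMap_cycle_of_phase φ hφ _).symm).trans (FddsIso.sumMap_comm _ _)

end Fdds

theorem monomial_not_injective_of_no_fixed_point_general {α : Type} [Fintype α] (a : α → α)
    (hfix : ∀ x : α, a x ≠ x) (k : ℕ) :
    ∃ (σ τ : Type) (_ : Fintype σ) (_ : Fintype τ) (x : σ → σ) (y : τ → τ),
      ¬ FddsIso x y ∧
      FddsIso (Prod.map a (powMap x k)) (Prod.map a (powMap y k)) := by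
  open Function Fdds in
  let ι (x : α) : Fin (Fintype.card α) := ⟨eventualPeriod a x - 2, by
    have := eventualPeriod_le_card (f := a) x
    have := two_le_eventualPeriod hfix x
    omega⟩
  have hι (x : α) : ι (a x) = ι x := by simp only [ι, eventualPeriod_apply]
  refine ⟨_, _, inferInstance, inferInstance, _, _, not_fddsIso_gadget (Fintype.card α),
    FddsIso.prodMap_powMap (FddsIso.prodMap_of_restrictFiber (hι := hι) fun i => ?_) k⟩
  refine fddsIso_prodMap_gadget i.isLt (fun y => phase a (i + 2) y.1) fun y => phase_apply ?_
  have hy := congrArg Fin.val y.2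
  have := two_le_eventualPeriod hfix y.1
  simp only [ι] at hy
  rw [show eventualPeriod a y.1 = i + 2 by omega]

/-- If `A` has no fixed point (i.e. is not cancelable), then for any
`k ≥ 1` the monomial `A X^k` is not injective up to isomorphism. -/
theorem monomial_not_injective_of_no_fixed_point {α : Type} [Fintype α] (a : α → α)
    (hfix : ∀ x : α, a x ≠ x) (k : ℕ) (hk : 1 ≤ k) :
    ∃ (σ τ : Type) (_ : Fintype σ) (_ : Fintype τ) (x : σ → σ) (y : τ → τ),
      ¬ FddsIso x y ∧
      FddsIso (Prod.map a (powMap x k)) (Prod.map a (powMap y k)) :=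
  monomial_not_injective_of_no_fixed_point_general a hfix k
end

section
/- Let P = Σ_{i=0}^m A_i X^i be a polynomial over FDDS. Then P is injective up to isomorphism (for all FDDS X, Y, P(X) ≅ P(Y) implies X ≅ Y) if and only if at least one non-constant coefficient A_i with i ≥ 1 is cancelable. -/
/-!
By Lovász's theorem a finite system `X` is determined up to isomorphism by the numbers
`|Hom(U, X)|` for connected finite `U`, and for connected `U` these counts are additive on sums
and multiplicative on products, so `|Hom(U, P(X))| = ∑ |Hom(U, A_i)| |Hom(U, X)|^i`.

If some `A_j` with `j ≥ 1` has a fixed point, then `|Hom(U, A_j)| > 0` for every `U` and the right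
hand side is strictly increasing in `|Hom(U, X)|`, so `P` is injective.

A system `W` without fixed points is not cancelable: if `L` is the set of its cycle lengths,
expanding `∏ a ∈ L, (C_a - a)` (with `C_a` the `a`-cycle) yields systems `X`, `Y` whose hom counts
differ on the one-point system but agree on every connected `U` admitting a map to `W`: such a `U`
also maps to some `C_a` with `a ∈ L`, and then `|Hom(U, C_a)| = a` kills the factor `C_a - a`.
So the cancelable systems are those with a fixed point, and if no nonconstant coefficient is
cancelable, the sum `W` of the nonconstant coefficients has no fixed point; then `W × X ≅ W × Y`
forces `P(X) ≅ P(Y)`.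
-/

open Function

namespace Function

variable {α : Type*} {f : α → α} {x : α}

theorem natCast_eq_natCast_of_iterate_eq_s10 (hx : x ∈ periodicPts f) {i j : ℕ}
    (h : f^[i] x = f^[j] x) : (i : ZMod (minimalPeriod f x)) = j := by
  have hp := minimalPeriod_pos_of_mem_periodicPts hx
  rw [ZMod.natCast_eq_natCast_iff']
  refine iterate_injOn_Iio_minimalPeriod (Nat.mod_lt _ hp) (Nat.mod_lt _ hp) ?_
  simp only [iterate_mod_minimalPeriod_eq, h]

theorem exists_iterate_mem_periodicPts [Finite α] (f : α → α) (x : α) :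
    ∃ n, f^[n] x ∈ periodicPts f := by
  obtain ⟨m, n, hmn, h⟩ := Set.finite_univ.exists_lt_map_eq_of_forall_mem (f := (f^[·] x))
    fun _ => Set.mem_univ _
  refine ⟨m, mk_mem_periodicPts (Nat.sub_pos_of_lt hmn) ?_⟩
  rw [IsPeriodicPt, IsFixedPt, ← iterate_add_apply, Nat.sub_add_cancel hmn.le]
  exact h.symm

end Function

theorem Nat.strictMono_sum_mul_pow {ι : Type*} (s : Finset ι) (c e : ι → ℕ) {j : ι}
    (hj : j ∈ s) (hcj : c j ≠ 0) (hej : e j ≠ 0) :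
    StrictMono fun a : ℕ => ∑ i ∈ s, c i * a ^ e i :=
  fun _ _ hab => Finset.sum_lt_sum (fun _ _ => Nat.mul_le_mul_left _ (Nat.pow_le_pow_left hab.le _))
    ⟨j, hj, Nat.mul_lt_mul_of_pos_left (Nat.pow_lt_pow_left hab hej) (Nat.pos_of_ne_zero hcj)⟩

namespace Fdds

variable {α α' β β' δ : Type}

def Hom (f : α → α) (g : β → β) : Type := {φ : α → β // Semiconj φ f g}

instance (f : α → α) (g : β → β) : CoeFun (Hom f g) (fun _ => α → β) := ⟨Subtype.val⟩

instance [Finite α] [Finite β] (f : α → α) (g : β → β) : Finite (Hom f g) :=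
  Subtype.finite

noncomputable def homCount (f : α → α) (g : β → β) : ℕ := Nat.card (Hom f g)

def InjHom (f : α → α) (g : β → β) : Type := {φ : Hom f g // Injective φ}

instance [Finite α] [Finite β] (f : α → α) (g : β → β) : Finite (InjHom f g) :=
  Subtype.finite

noncomputable def injHomCount (f : α → α) (g : β → β) : ℕ := Nat.card (InjHom f g)

def Hom.const {f : α → α} {g : β → β} {b : β} (hb : IsFixedPt g b) : Hom f g :=
  ⟨fun _ => b, fun _ => hb.symm⟩

def Hom.comp {u : δ → δ} {g : β → β} {w : β' → β'} (ψ : Hom g w) (φ : Hom u g) : Hom u w :=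
  ⟨ψ ∘ φ, ψ.2.comp_left φ.2⟩

def Hom.congrRight {g : β → β} {g' : β' → β'} (e : β ≃ β') (he : Semiconj e g g')
    (u : δ → δ) : Hom u g ≃ Hom u g' where
  toFun φ := ⟨e ∘ φ, he.comp_left φ.2⟩
  invFun ψ := ⟨e.symm ∘ ψ, (he.inverse_left e.left_inv e.right_inv).comp_left ψ.2⟩
  left_inv φ := Subtype.ext (funext fun x => e.symm_apply_apply (φ x))
  right_inv ψ := Subtype.ext (funext fun x => e.apply_symm_apply (ψ x))

def Hom.congrLeft {f : α → α} {f' : α' → α'} (e : α ≃ α') (he : Semiconj e f f')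
    (g : β → β) : Hom f g ≃ Hom f' g where
  toFun φ := ⟨φ ∘ e.symm, φ.2.comp_left (he.inverse_left e.left_inv e.right_inv)⟩
  invFun ψ := ⟨ψ ∘ e, ψ.2.comp_left he⟩
  left_inv φ := Subtype.ext (funext fun x => congrArg φ (e.symm_apply_apply x))
  right_inv ψ := Subtype.ext (funext fun x => congrArg ψ (e.apply_symm_apply x))

theorem homCount_congr_right {g : β → β} {g' : β' → β'} (h : FddsIso g g') (u : δ → δ) :
    homCount u g = homCount u g' :=
  let ⟨e, he⟩ := h
  Nat.card_congr (Hom.congrRight e (semiconj_iff_comp_eq.2 he) u)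

theorem homCount_congr_left {f : α → α} {f' : α' → α'} (h : FddsIso f f') (g : β → β) :
    homCount f g = homCount f' g :=
  let ⟨e, he⟩ := h
  Nat.card_congr (Hom.congrLeft e (semiconj_iff_comp_eq.2 he) g)

/-! ### Lovász's theorem -/

def Cong (f : α → α) : Type := {s : Setoid α // ∀ ⦃x y⦄, s x y → s (f x) (f y)}

noncomputable instance [Finite α] (f : α → α) : Fintype (Cong f) :=
  have : Finite (Setoid α) := Finite.of_injective (fun s : Setoid α => ⇑s) fun _ _ h =>
    Setoid.ext fun a b => iff_of_eq (congrFun₂ h a b)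
  have : Finite (Cong f) := Subtype.finite
  Fintype.ofFinite _

def Cong.map {f : α → α} (s : Cong f) : Quotient s.1 → Quotient s.1 :=
  Quotient.map f s.2

def Cong.bot (f : α → α) : Cong f :=
  ⟨⊥, fun x y h => by
    rw [Setoid.bot_def] at h ⊢
    exact congrArg f h⟩

def Hom.ker {f : α → α} {g : β → β} (φ : Hom f g) : Cong f :=
  ⟨Setoid.ker φ, fun x y h => by
    simp only [Setoid.ker_def] at h ⊢
    rw [φ.2 x, φ.2 y, h]⟩

theorem Hom.ker_eq_bot_iff {f : α → α} {g : β → β} (φ : Hom f g) :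
    φ.ker = Cong.bot f ↔ Injective φ :=
  Subtype.ext_iff.trans Setoid.ker_eq_bot_iff

def Cong.homKerEquiv {f : α → α} (s : Cong f) (g : β → β) :
    {φ : Hom f g // φ.ker = s} ≃ InjHom s.map g where
  toFun φ := ⟨⟨Quotient.lift φ.1.1 fun x y h => by rwa [← φ.2] at h,
      fun q => Quotient.inductionOn q φ.1.2⟩,
    fun q r => Quotient.inductionOn₂ q r fun x y h => Quotient.sound (φ.2 ▸ h)⟩
  invFun ψ := ⟨⟨ψ.1 ∘ Quotient.mk s.1, fun x => ψ.1.2 (Quotient.mk s.1 x)⟩,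
    Subtype.ext <| Setoid.ext fun x y => ψ.2.eq_iff.trans Quotient.eq⟩
  left_inv φ := rfl
  right_inv ψ := Subtype.ext <| Subtype.ext <| funext fun q => Quotient.inductionOn q fun _ => rfl

theorem Cong.card_quotient_lt [Finite α] {f : α → α} {s : Cong f} (hs : s ≠ Cong.bot f) :
    Nat.card (Quotient s.1) < Nat.card α := by
  have := Fintype.ofFinite α
  have := Fintype.ofFinite (Quotient s.1)
  simp only [Nat.card_eq_fintype_card]
  refine Fintype.card_lt_of_surjective_not_injective _ Quotient.mk''_surjective fun hinj => hs ?_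
  exact Subtype.ext (Setoid.ker_mk_eq s.1 ▸ Setoid.ker_eq_bot_iff.2 hinj)

open scoped Classical in
theorem homCount_eq_injHomCount_add_sum [Finite α] [Finite β] (f : α → α) (g : β → β) :
    homCount f g
      = injHomCount f g + ∑ s ∈ Finset.univ.erase (Cong.bot f), injHomCount s.map g := by
  rw [homCount, ← Nat.card_congr (Equiv.sigmaFiberEquiv (Hom.ker (g := g))), Nat.card_sigma,
    ← Finset.add_sum_erase _ _ (Finset.mem_univ (Cong.bot f))]
  exact congrArg₂ (· + ·)
    (Nat.card_congr (Equiv.subtypeEquivRight fun φ => φ.ker_eq_bot_iff))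
    (Finset.sum_congr rfl fun s _ => Nat.card_congr (s.homKerEquiv g))

open scoped Classical in
theorem injHomCount_eq_of_homCount_eq [Finite β] [Finite β'] {g : β → β} {g' : β' → β'}
    (h : ∀ (δ : Type) [Finite δ] (u : δ → δ), homCount u g = homCount u g')
    [Finite α] (u : α → α) : injHomCount u g = injHomCount u g' := by
  induction hn : Nat.card α using Nat.strong_induction_on generalizing α with
  | _ n ih =>
    have hquot : ∀ s ∈ Finset.univ.erase (Cong.bot u),
        injHomCount s.map g = injHomCount s.map g' := fun s hs =>
      ih _ (hn ▸ Cong.card_quotient_lt (Finset.ne_of_mem_erase hs)) s.map rfl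
    have := h α u
    rw [homCount_eq_injHomCount_add_sum, homCount_eq_injHomCount_add_sum,
      Finset.sum_congr rfl hquot] at this
    omega

theorem nonempty_injHom_of_homCount_eq [Finite β] [Finite β'] {g : β → β} {g' : β' → β'}
    (h : ∀ (δ : Type) [Finite δ] (u : δ → δ), homCount u g = homCount u g') :
    Nonempty (InjHom g g') := by
  have : Nonempty (InjHom g g) := ⟨⟨⟨id, Semiconj.id_left⟩, injective_id⟩⟩
  have hpos : 0 < injHomCount g g := Nat.card_pos
  rw [injHomCount_eq_of_homCount_eq h] at hpos
  exact (Nat.card_pos_iff.1 hpos).1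

theorem fddsIso_of_homCount_eq [Finite β] [Finite β'] {g : β → β} {g' : β' → β'}
    (h : ∀ (δ : Type) [Finite δ] (u : δ → δ), homCount u g = homCount u g') :
    FddsIso g g' := by
  obtain ⟨⟨φ, hφ⟩⟩ := nonempty_injHom_of_homCount_eq h
  obtain ⟨⟨ψ, hψ⟩⟩ := nonempty_injHom_of_homCount_eq fun δ _ u => (h δ u).symm
  have hbij : Bijective φ := (Nat.bijective_iff_injective_and_card φ).2
    ⟨hφ, (Nat.card_le_card_of_injective φ hφ).antisymm (Nat.card_le_card_of_injective ψ hψ)⟩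
  exact ⟨Equiv.ofBijective φ hbij, φ.2.comp_eq⟩

/-! ### Connected systems -/

def Connected (u : δ → δ) : Prop := Nonempty δ ∧ ∀ x y, ∃ m n, u^[m] x = u^[n] y

theorem Connected.eq_of_invariant {u : δ → δ} (hu : Connected u) {ι : Type*} {t : δ → ι}
    (ht : t ∘ u = t) (x y : δ) : t x = t y := by
  obtain ⟨m, n, h⟩ := hu.2 x y
  calc t x = t (u^[m] x) := (congrFun (iterate_invariant ht m) x).symm
    _ = t (u^[n] y) := congrArg t h
    _ = t y := congrFun (iterate_invariant ht n) y

theorem connected_id_punit : Connected (id : PUnit → PUnit) :=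
  ⟨inferInstance, fun _ _ => ⟨0, 0, rfl⟩⟩

def reachable (u : δ → δ) : Setoid δ where
  r x y := ∃ m n, u^[m] x = u^[n] y
  iseqv := by
    refine ⟨fun _ => ⟨0, 0, rfl⟩, fun ⟨m, n, h⟩ => ⟨n, m, h.symm⟩, ?_⟩
    rintro x y z ⟨m, n, h⟩ ⟨m', n', h'⟩
    refine ⟨m' + m, n + n', ?_⟩
    rw [iterate_add_apply, h, ← iterate_add_apply, add_comm m' n, iterate_add_apply, h',
      ← iterate_add_apply]

def component (u : δ → δ) (c : Quotient (reachable u)) : Type := {x // Quotient.mk _ x = c}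

instance [Finite δ] (u : δ → δ) (c : Quotient (reachable u)) : Finite (component u c) :=
  Subtype.finite

def componentMap (u : δ → δ) (c : Quotient (reachable u)) : component u c → component u c :=
  fun x => ⟨u x.1, (Quotient.sound (s := reachable u) ⟨0, 1, rfl⟩).trans x.2⟩

theorem connected_componentMap (u : δ → δ) (c : Quotient (reachable u)) :
    Connected (componentMap u c) := by
  obtain ⟨x, hx⟩ := Quotient.exists_rep c
  refine ⟨⟨⟨x, hx⟩⟩, fun y z => ?_⟩
  obtain ⟨m, n, h⟩ := Quotient.exact (y.2.trans z.2.symm)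
  have hval : Semiconj (fun x : component u c => x.1) (componentMap u c) u := fun _ => rfl
  exact ⟨m, n, Subtype.ext <| (hval.iterate_right m y).trans
    (h.trans (hval.iterate_right n z).symm)⟩

theorem fddsIso_sigma_componentMap (u : δ → δ) :
    FddsIso (Sigma.map id (componentMap u)) u :=
  ⟨Equiv.sigmaFiberEquiv _, rfl⟩

/-! ### Hom counts of sums and products -/

section Sigma

variable {ι : Type} {κ : ι → Type} (t : ∀ i, κ i → κ i)

def Hom.sigmaLeftEquiv (g : β → β) : Hom (Sigma.map id t) g ≃ ∀ i, Hom (t i) g where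
  toFun φ i := ⟨φ ∘ Sigma.mk i, fun x => φ.2 ⟨i, x⟩⟩
  invFun Φ := ⟨fun p => Φ p.1 p.2, fun p => (Φ p.1).2 p.2⟩
  left_inv _ := rfl
  right_inv _ := rfl

theorem homCount_sigma_left [Fintype ι] [∀ i, Finite (κ i)] [Finite β] (g : β → β) :
    homCount (Sigma.map id t) g = ∏ i, homCount (t i) g := by
  rw [homCount, Nat.card_congr (Hom.sigmaLeftEquiv t g), Nat.card_pi]
  rfl

/-- A homomorphism out of a connected system lands in a single summand. -/
noncomputable def Hom.sigmaRightEquiv {u : δ → δ} (hu : Connected u) :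
    Hom u (Sigma.map id t) ≃ Σ i, Hom u (t i) := by
  refine (Equiv.ofBijective (fun p : Σ i, Hom u (t i) =>
    (⟨fun x => ⟨p.1, p.2 x⟩, fun x => congrArg (Sigma.mk p.1) (p.2.2 x)⟩ :
      Hom u (Sigma.map id t))) ⟨?_, fun φ => ?_⟩).symm
  · obtain ⟨x₀⟩ := hu.1
    rintro ⟨i, ψ⟩ ⟨j, χ⟩ h
    have h' := congrArg Subtype.val h
    obtain rfl : i = j := congrArg Sigma.fst (congrFun h' x₀)
    exact Sigma.ext rfl <| heq_of_eq <| Subtype.ext <| funext fun x =>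
      sigma_mk_injective (congrFun h' x)
  · obtain ⟨x₀⟩ := hu.1
    have hfst : ∀ x, (φ.1 x).1 = (φ.1 x₀).1 := fun x =>
      hu.eq_of_invariant (t := Sigma.fst ∘ φ.1)
        (funext fun y => (congrArg Sigma.fst (φ.2 y)).trans rfl) x x₀
    have hφ : ∀ x, φ.1 x = ⟨(φ.1 x₀).1, hfst x ▸ (φ.1 x).2⟩ := fun x => Sigma.eq (hfst x) rfl
    refine ⟨⟨(φ.1 x₀).1, fun x => hfst x ▸ (φ.1 x).2, fun x => sigma_mk_injective ?_⟩,
      Subtype.ext (funext fun x => (hφ x).symm)⟩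
    rw [← hφ, φ.2 x, hφ x]
    rfl

theorem homCount_sigma_right [Fintype ι] [∀ i, Finite (κ i)] [Finite δ] {u : δ → δ}
    (hu : Connected u) : homCount u (Sigma.map id t) = ∑ i, homCount u (t i) := by
  rw [homCount, Nat.card_congr (Hom.sigmaRightEquiv t hu), Nat.card_sigma]
  rfl

end Sigma

theorem fddsIso_of_homCount_connected_eq [Finite β] [Finite β'] {g : β → β} {g' : β' → β'}
    (h : ∀ (δ : Type) [Finite δ] (u : δ → δ), Connected u → homCount u g = homCount u g') :
    FddsIso g g' := by
  refine fddsIso_of_homCount_eq fun δ _ u => ?_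
  have := Fintype.ofFinite (Quotient (reachable u))
  rw [← homCount_congr_left (fddsIso_sigma_componentMap u) g,
    ← homCount_congr_left (fddsIso_sigma_componentMap u) g', homCount_sigma_left,
    homCount_sigma_left]
  exact Finset.prod_congr rfl fun c _ => h _ _ (connected_componentMap u c)

theorem homCount_sum [Finite δ] [Finite β] [Finite β'] {u : δ → δ} (hu : Connected u)
    (g : β → β) (g' : β' → β') : homCount u (Sum.map g g') = homCount u g + homCount u g' := by
  let t : ∀ b : Bool, (bif b then β' else β) → (bif b then β' else β) := fun b =>
    match b with
    | false => g
    | true => g'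
  have e : FddsIso (Sum.map g g') (Sigma.map id t) :=
    ⟨Equiv.sumEquivSigmaBool β β', funext fun x => by cases x <;> rfl⟩
  have : ∀ b, Finite (bif b then β' else β) := fun b => by cases b <;> assumption
  rw [homCount_congr_right e, homCount_sigma_right t hu, Fintype.sum_bool, add_comm]

def Hom.prodRightEquiv (u : δ → δ) (g : β → β) (g' : β' → β') :
    Hom u (Prod.map g g') ≃ Hom u g × Hom u g' where
  toFun φ := (⟨Prod.fst ∘ φ, fun x => congrArg Prod.fst (φ.2 x)⟩,
    ⟨Prod.snd ∘ φ, fun x => congrArg Prod.snd (φ.2 x)⟩)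
  invFun p := ⟨fun x => (p.1 x, p.2 x), fun x => Prod.ext (p.1.2 x) (p.2.2 x)⟩
  left_inv _ := rfl
  right_inv _ := rfl

theorem homCount_prod [Finite δ] [Finite β] [Finite β'] (u : δ → δ) (g : β → β)
    (g' : β' → β') : homCount u (Prod.map g g') = homCount u g * homCount u g' := by
  rw [homCount, Nat.card_congr (Hom.prodRightEquiv u g g'), Nat.card_prod]
  rfl

def Hom.piRightEquiv (u : δ → δ) (g : β → β) (ι : Type) :
    Hom u (fun v : ι → β => g ∘ v) ≃ (ι → Hom u g) where
  toFun φ i := ⟨fun x => φ x i, fun x => congrFun (φ.2 x) i⟩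
  invFun Φ := ⟨fun x i => Φ i x, fun x => funext fun i => (Φ i).2 x⟩
  left_inv _ := rfl
  right_inv _ := rfl

theorem homCount_pow [Finite δ] [Finite β] (u : δ → δ) (g : β → β) (k : ℕ) :
    homCount u (fun v : Fin k → β => g ∘ v) = homCount u g ^ k := by
  rw [homCount, Nat.card_congr (Hom.piRightEquiv u g (Fin k)), Nat.card_fun, Nat.card_fin]
  rfl

theorem homCount_id [Finite β] {u : δ → δ} (hu : Connected u) :
    homCount u (id : β → β) = Nat.card β := by
  obtain ⟨x₀⟩ := hu.1
  refine Nat.card_congr ⟨fun φ => φ x₀, fun b => Hom.const (g := id) (b := b) rfl,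
    fun φ => Subtype.ext (funext fun x => ?_), fun _ => rfl⟩
  exact hu.eq_of_invariant (t := φ) φ.2.comp_eq x₀ x

theorem homCount_punit_eq_zero {g : β → β} (hg : ∀ b, g b ≠ b) :
    homCount (id : PUnit → PUnit) g = 0 :=
  have : IsEmpty (Hom id g) := ⟨fun φ => hg _ (φ.2 PUnit.unit).symm⟩
  Nat.card_of_isEmpty

/-! ### Cycles -/

def cycle (a : ℕ) : ZMod a → ZMod a := (· + 1)

theorem cycle_apply_ne {a : ℕ} (ha : a ≠ 1) (z : ZMod a) : cycle a z ≠ z := fun h =>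
  ha (ZMod.one_eq_zero_iff.1 (add_eq_left.1 h))

/-- On a connected system the homomorphisms to a cycle form a torsor under rotation. -/
theorem homCount_cycle {a : ℕ} [NeZero a] {u : δ → δ} (hu : Connected u)
    (ψ : Hom u (cycle a)) : homCount u (cycle a) = a := by
  obtain ⟨x₀⟩ := hu.1
  refine (Nat.card_congr (Equiv.ofBijective (fun φ : Hom u (cycle a) => φ x₀)
    ⟨fun φ φ' h => ?_, fun z => ?_⟩)).trans (Nat.card_zmod a)
  · have hinv : (fun x => φ x - φ' x) ∘ u = fun x => φ x - φ' x := funext fun x => by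
      simp only [comp_apply, φ.2 x, φ'.2 x, cycle]
      ring
    refine Subtype.ext (funext fun x => sub_eq_zero.1 ?_)
    rw [hu.eq_of_invariant hinv x x₀]
    exact sub_eq_zero.2 h
  · refine ⟨⟨fun x => ψ x + (z - ψ x₀), fun x => ?_⟩, by simp⟩
    simp only [ψ.2 x, cycle]
    ring

/-- `y ↦ n - m`, where `u^[m] y = u^[n] x₀`, is well defined modulo the period of `φ x₀`. -/
theorem nonempty_hom_cycle {w : β → β} {u : δ → δ} (hu : Connected u) (φ : Hom u w)
    {x₀ : δ} (hx₀ : x₀ ∈ periodicPts u) :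
    Nonempty (Hom u (cycle (minimalPeriod w (φ x₀)))) := by
  have hcong : ∀ i j, u^[i] x₀ = u^[j] x₀ → (i : ZMod (minimalPeriod w (φ x₀))) = j :=
    fun i j h => natCast_eq_natCast_of_iterate_eq_s10 (φ.2.mapsTo_periodicPts hx₀) <| by
      rw [← φ.2.iterate_right i x₀, h, φ.2.iterate_right j x₀]
  choose m n hmn using fun y => hu.2 y x₀
  have key : ∀ y k l, u^[k] y = u^[l] x₀ →
      ((n y : ZMod (minimalPeriod w (φ x₀))) - m y) = l - k := by
    intro y k l h
    have h₁ : u^[k + n y] x₀ = u^[k + m y] y := by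
      rw [iterate_add_apply, ← hmn y, ← iterate_add_apply]
    have h₂ : u^[m y + k] y = u^[m y + l] x₀ := by
      rw [iterate_add_apply, h, ← iterate_add_apply]
    have := hcong _ _ (h₁.trans (add_comm k (m y) ▸ h₂))
    push_cast at this
    linear_combination this
  refine ⟨⟨fun y => n y - m y, fun y => ?_⟩⟩
  show (n (u y) : ZMod (minimalPeriod w (φ x₀))) - m (u y) = n y - m y + 1
  rw [key (u y) (m y) (n y + 1) (by
    rw [← iterate_succ_apply, iterate_succ_apply', hmn y]
    exact (iterate_succ_apply' u _ _).symm)]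
  push_cast
  ring

/-! ### Cancelability -/

theorem homCount_eq_of_fddsIso_prod {τ : Type} [Finite τ] [Finite β] [Finite β'] [Finite δ]
    {w : τ → τ} {g : β → β} {g' : β' → β'} (h : FddsIso (Prod.map w g) (Prod.map w g'))
    {u : δ → δ} (hu : Nonempty (Hom u w)) : homCount u g = homCount u g' := by
  refine Nat.eq_of_mul_eq_mul_left (Nat.card_pos_iff.2 ⟨hu, inferInstance⟩) ?_
  change homCount u w * _ = homCount u w * _
  rw [← homCount_prod, ← homCount_prod]
  exact homCount_congr_right h u

theorem cancelable_of_isFixedPt {τ : Type} [Finite τ] {w : τ → τ} {e : τ}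
    (he : IsFixedPt w e) : Cancelable w := fun _ _ _ _ _ _ h =>
  fddsIso_of_homCount_eq fun _ _ _ => homCount_eq_of_fddsIso_prod h ⟨Hom.const he⟩

theorem exists_homCount_sub_eq_prod (L : Finset ℕ) (hL : 0 ∉ L) :
    ∃ (X Y : Type) (_ : Finite X) (_ : Finite Y) (fX : X → X) (fY : Y → Y),
      ∀ (δ : Type) [Finite δ] (u : δ → δ), Connected u →
        (homCount u fX : ℤ) - homCount u fY = ∏ a ∈ L, ((homCount u (cycle a) : ℤ) - a) := by
  induction L using Finset.induction_on with
  | empty =>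
    refine ⟨PUnit, PEmpty, inferInstance, inferInstance, id, id, fun δ _ u hu => ?_⟩
    simp [homCount_id hu]
  | insert a L haL ih =>
    obtain ⟨X, Y, _, _, fX, fY, h⟩ := ih fun h => hL (Finset.mem_insert_of_mem h)
    have : NeZero a := ⟨fun h => hL (h ▸ Finset.mem_insert_self a L)⟩
    -- `(X - Y) (C_a - a) = (X × C_a + a Y) - (Y × C_a + a X)`
    refine ⟨X × ZMod a ⊕ Fin a × Y, Y × ZMod a ⊕ Fin a × X, inferInstance, inferInstance,
      Sum.map (Prod.map fX (cycle a)) (Prod.map id fY),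
      Sum.map (Prod.map fY (cycle a)) (Prod.map id fX), fun δ _ u hu => ?_⟩
    rw [Finset.prod_insert haL, ← h δ u hu]
    simp only [homCount_sum hu, homCount_prod, homCount_id hu, Nat.card_fin]
    push_cast
    ring

theorem exists_fddsIso_prod_not_fddsIso {τ : Type} [Fintype τ] {w : τ → τ}
    (hw : ∀ t, ¬IsFixedPt w t) :
    ∃ (X Y : Type) (_ : Fintype X) (_ : Fintype Y) (fX : X → X) (fY : Y → Y),
      FddsIso (Prod.map w fX) (Prod.map w fY) ∧ ¬FddsIso fX fY := by
  classical
  -- `minimalPeriod` is `0` at the points that are not periodic.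
  set L := (Finset.univ.image (minimalPeriod w)).erase 0
  obtain ⟨X, Y, _, _, fX, fY, h⟩ := exists_homCount_sub_eq_prod L (Finset.notMem_erase 0 _)
  refine ⟨X, Y, Fintype.ofFinite X, Fintype.ofFinite Y, fX, fY,
    fddsIso_of_homCount_connected_eq fun δ _ u hu => ?_, fun hXY => ?_⟩
  · rw [homCount_prod, homCount_prod]
    rcases isEmpty_or_nonempty (Hom u w) with hempty | hne
    · rw [homCount, Nat.card_of_isEmpty, zero_mul, zero_mul]
    obtain ⟨φ⟩ := hne
    obtain ⟨x⟩ := hu.1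
    obtain ⟨k, hk⟩ := exists_iterate_mem_periodicPts u x
    have ha : minimalPeriod w (φ (u^[k] x)) ∈ L := Finset.mem_erase.2
      ⟨(minimalPeriod_pos_of_mem_periodicPts (φ.2.mapsTo_periodicPts hk)).ne',
        Finset.mem_image_of_mem _ (Finset.mem_univ _)⟩
    have : NeZero (minimalPeriod w (φ (u^[k] x))) := ⟨Finset.ne_of_mem_erase ha⟩
    have hzero := h δ u hu
    rw [Finset.prod_eq_zero ha (by rw [homCount_cycle hu (nonempty_hom_cycle hu φ hk).some,
      sub_self]), sub_eq_zero] at hzero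
    rw [Nat.cast_inj.1 hzero]
  · have hpt := h PUnit id connected_id_punit
    rw [homCount_congr_right hXY, sub_self] at hpt
    refine Finset.prod_ne_zero_iff.2 (fun a ha => ?_) hpt.symm
    have ha1 : a ≠ 1 := fun ha1 => by
      obtain ⟨t, -, ht⟩ := Finset.mem_image.1 (Finset.mem_of_mem_erase (ha1 ▸ ha))
      exact hw t (minimalPeriod_eq_one_iff_isFixedPt.1 ht)
    rw [homCount_punit_eq_zero (cycle_apply_ne ha1), Nat.cast_zero, zero_sub, neg_ne_zero,
      Nat.cast_ne_zero]
    exact Finset.ne_of_mem_erase ha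

theorem cancelable_iff_exists_isFixedPt {τ : Type} [Fintype τ] (w : τ → τ) :
    Cancelable w ↔ ∃ t, IsFixedPt w t := by
  refine ⟨fun hw => ?_, fun ⟨_, he⟩ => cancelable_of_isFixedPt he⟩
  by_contra! hfix
  obtain ⟨X, Y, _, _, fX, fY, hprod, hXY⟩ := exists_fddsIso_prod_not_fddsIso hfix
  exact hXY (hw X Y fX fY hprod)

/-! ### Polynomials -/

section Polynomial

variable {m : ℕ} {γ : Fin (m + 1) → Type} (g : ∀ i, γ i → γ i)

theorem homCount_polyEval [∀ i, Finite (γ i)] [Finite α] [Finite δ] (f : α → α) {u : δ → δ}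
    (hu : Connected u) :
    homCount u (polyEval g f) = ∑ i, homCount u (g i) * homCount u f ^ (i : ℕ) := by
  change homCount u (Sigma.map id fun i => Prod.map (g i) fun v : Fin i → α => f ∘ v) = _
  simp only [homCount_sigma_right _ hu, homCount_prod, homCount_pow]

theorem fddsIso_polyEval_of_fddsIso_prod [∀ i, Finite (γ i)] [Finite α] [Finite α'] {τ : Type}
    [Finite τ] {w : τ → τ} (hw : ∀ i : Fin (m + 1), 1 ≤ i.val → Nonempty (Hom (g i) w)) {f : α → α}
    {f' : α' → α'} (h : FddsIso (Prod.map w f) (Prod.map w f')) :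
    FddsIso (polyEval g f) (polyEval g f') := by
  refine fddsIso_of_homCount_connected_eq fun δ _ u hu => ?_
  rw [homCount_polyEval g f hu, homCount_polyEval g f' hu]
  refine Finset.sum_congr rfl fun i _ => ?_
  rcases Nat.eq_zero_or_pos i.val with hi | hi
  · rw [hi, pow_zero, pow_zero]
  rcases (homCount u (g i)).eq_zero_or_pos with hzero | hpos
  · rw [hzero, zero_mul, zero_mul]
  obtain ⟨φ⟩ := (Nat.card_pos_iff.1 hpos).1
  obtain ⟨ψ⟩ := hw i hi
  rw [homCount_eq_of_fddsIso_prod h ⟨ψ.comp φ⟩]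

theorem fddsIso_of_fddsIso_polyEval [∀ i, Finite (γ i)] [Finite α] [Finite α'] {j : Fin (m + 1)}
    (hj : 1 ≤ j.val) {e : γ j} (he : IsFixedPt (g j) e) {f : α → α} {f' : α' → α'}
    (h : FddsIso (polyEval g f) (polyEval g f')) : FddsIso f f' := by
  refine fddsIso_of_homCount_connected_eq fun δ _ u hu => ?_
  have hcount := homCount_congr_right h u
  rw [homCount_polyEval g f hu, homCount_polyEval g f' hu] at hcount
  have : Nonempty (Hom u (g j)) := ⟨Hom.const he⟩
  exact (Nat.strictMono_sum_mul_pow _ _ _ (Finset.mem_univ j) Nat.card_pos.ne' (by omega)).injective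
    hcount

def nonconstCoeffSum : (Σ i : {i : Fin (m + 1) // 1 ≤ i.val}, γ i) →
    Σ i : {i : Fin (m + 1) // 1 ≤ i.val}, γ i :=
  Sigma.map id fun i => g i

theorem nonempty_hom_nonconstCoeffSum {i : Fin (m + 1)} (hi : 1 ≤ i.val) :
    Nonempty (Hom (g i) (nonconstCoeffSum g)) :=
  ⟨⟨Sigma.mk (β := fun i : {i : Fin (m + 1) // 1 ≤ i.val} => γ i) ⟨i, hi⟩, fun _ => rfl⟩⟩

end Polynomial

end Fdds

/-- A polynomial `P = Σ_{i=0}^m A_i X^i` over FDDS is injective up to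
isomorphism iff at least one non-constant coefficient `A_i` (`i ≥ 1`) is cancelable. -/
theorem poly_injective_iff_cancelable_coeff {m : ℕ} {γ : Fin (m + 1) → Type}
    [∀ i, Fintype (γ i)] (g : ∀ i, γ i → γ i) :
    (∀ (α β : Type) [Fintype α] [Fintype β] (f : α → α) (f' : β → β),
      FddsIso (polyEval g f) (polyEval g f') → FddsIso f f')
    ↔ (∃ i : Fin (m + 1), 1 ≤ i.val ∧ Cancelable (g i)) := by
  constructor
  · intro hinj
    by_contra! hcan
    obtain ⟨X, Y, _, _, fX, fY, hprod, hXY⟩ :=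
      Fdds.exists_fddsIso_prod_not_fddsIso (w := Fdds.nonconstCoeffSum g) fun ⟨i, c⟩ hc =>
        hcan i i.2 (Fdds.cancelable_of_isFixedPt (eq_of_heq (Sigma.mk.inj_iff.1 hc).2))
    exact hXY <| hinj X Y fX fY <| Fdds.fddsIso_polyEval_of_fddsIso_prod g
      (fun _ => Fdds.nonempty_hom_nonconstCoeffSum g) hprod
  · rintro ⟨j, hj, hcan⟩ α β _ _ f f' h
    obtain ⟨e, he⟩ := (Fdds.cancelable_iff_exists_isFixedPt (g j)).1 hcan
    exact Fdds.fddsIso_of_fddsIso_polyEval g hj he h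
end
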